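/- Suppose p divides k_i for every relation R_i ∈ S outside the thin radical O_ϑ(S). If S is a p-transitive scheme, then S is the unique strongly normal closed subset of S that contains O_ϑ(S). -/
import Mathlib


open scoped Classical

/-- An association scheme of class `d` on a nonempty finite set `X`:
a partition of `X × X` into nonempty relations `r 0, …, r d` with
`r 0` the diagonal, closed under converse (`star`), and with
intersection numbers `pNum i j k`. -/
structure AssocScheme (X : Type*) [Fintype X] [Nonempty X] (d : ℕ) where
  r : Fin (d + 1) → Set (X × X)
  r_nonempty : ∀ i, (r i).Nonempty
  existsUnique_rel : ∀ q : X × X, ∃! i, q ∈ r i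
  r_zero : r 0 = {q : X × X | q.1 = q.2}
  star : Fin (d + 1) → Fin (d + 1)
  mem_star : ∀ (i : Fin (d + 1)) (q : X × X), q ∈ r (star i) ↔ (q.2, q.1) ∈ r i
  pNum : Fin (d + 1) → Fin (d + 1) → Fin (d + 1) → ℕ
  ncard_eq : ∀ (i j k : Fin (d + 1)), ∀ q ∈ r k,
    {z : X | (q.1, z) ∈ r i ∧ (z, q.2) ∈ r j}.ncard = pNum i j k

namespace AssocScheme

variable {X : Type*} [Fintype X] [Nonempty X] {d : ℕ}

/-- The valency `k_i = p_{i i*}^0` of the relation `R_i`. -/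
def val (S : AssocScheme X d) (i : Fin (d + 1)) : ℕ := S.pNum i (S.star i) 0

/-- The complex product `UV = {R_k : p_{uv}^k > 0 for some R_u ∈ U, R_v ∈ V}`. -/
def cmul (S : AssocScheme X d) (U V : Set (Fin (d + 1))) : Set (Fin (d + 1)) :=
  {k | ∃ u ∈ U, ∃ v ∈ V, 0 < S.pNum u v k}

/-- A nonempty subset `T` is closed if `T*T ⊆ T`. -/
def IsClosedSubset (S : AssocScheme X d) (T : Set (Fin (d + 1))) : Prop :=
  T.Nonempty ∧ S.cmul (S.star '' T) T ⊆ T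

/-- The thin radical `O_ϑ(S) = {R_i : k_i = 1}`. -/
def thinRadical (S : AssocScheme X d) : Set (Fin (d + 1)) := {i | S.val i = 1}

/-- A closed subset `T` is strongly normal if `R_{i*} T R_i ⊆ T` for all `i`. -/
def IsStronglyNormal (S : AssocScheme X d) (T : Set (Fin (d + 1))) : Prop :=
  S.IsClosedSubset T ∧ ∀ i : Fin (d + 1), S.cmul (S.cmul {S.star i} T) {i} ⊆ T

/-- The thin residue `O^ϑ(S)`: the intersection of all strongly normal closed subsets. -/
def thinResidue (S : AssocScheme X d) : Set (Fin (d + 1)) :=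
  ⋂₀ {T | S.IsStronglyNormal T}

/-- `⟨H⟩`: the intersection of all closed subsets containing `H`. -/
def closure (S : AssocScheme X d) (H : Set (Fin (d + 1))) : Set (Fin (d + 1)) :=
  ⋂₀ {T | S.IsClosedSubset T ∧ H ⊆ T}

/-- The adjacency matrix `A̅_i` of `R_i`, with entries in `𝔽`. -/
noncomputable def adj (S : AssocScheme X d) (𝔽 : Type*) [Field 𝔽] (i : Fin (d + 1)) :
    Matrix X X 𝔽 :=
  Matrix.of fun x y => if (x, y) ∈ S.r i then 1 else 0

/-- `v` spans a trivial `𝔽S`-submodule of the regular `𝔽S`-module: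
`v` is a nonzero element of `𝔽S` with `A̅_i v = k̅_i v` for all `i`. -/
def IsTrivialVector (S : AssocScheme X d) (𝔽 : Type*) [Field 𝔽] (v : Matrix X X 𝔽) : Prop :=
  v ≠ 0 ∧ v ∈ Submodule.span 𝔽 (Set.range (S.adj 𝔽)) ∧
    ∀ i : Fin (d + 1), S.adj 𝔽 i * v = (S.val i : 𝔽) • v

/-- `S` is `p`-transitive over `𝔽` (of characteristic `p`) if the regular `𝔽S`-module
contains a unique trivial `𝔽S`-submodule. -/
def IsPTransitive (S : AssocScheme X d) (𝔽 : Type*) [Field 𝔽] : Prop :=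
  ∃! W : Submodule 𝔽 (Matrix X X 𝔽),
    ∃ v : Matrix X X 𝔽, S.IsTrivialVector 𝔽 v ∧ W = Submodule.span 𝔽 {v}

/-- A subset `T ⊆ S` is singular if `O_ϑ(S) ⊆ T` and
`R_x R_{y*} R_y R_z ⊆ T` for all `R_x ∈ O_ϑ(S)`, `R_y ∈ S`, `R_z ∈ T`. -/
def IsSingular (S : AssocScheme X d) (T : Set (Fin (d + 1))) : Prop :=
  S.thinRadical ⊆ T ∧ ∀ x ∈ S.thinRadical, ∀ y : Fin (d + 1), ∀ z ∈ T,
    S.cmul (S.cmul (S.cmul {x} {S.star y}) {y}) {z} ⊆ T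

/-- `S_{p'} = {R_i ∈ S : p ∤ k_i}`. -/
def pPrimePart (S : AssocScheme X d) (p : ℕ) : Set (Fin (d + 1)) :=
  {i | ¬ p ∣ S.val i}

end AssocScheme

namespace AssocScheme

variable {X : Type*} [Fintype X] [Nonempty X] {d : ℕ} (S : AssocScheme X d)

/-- The unique relation index of a pair. -/
noncomputable def relOf (q : X × X) : Fin (d + 1) :=
  (S.existsUnique_rel q).choose

lemma mem_relOf (q : X × X) : q ∈ S.r (S.relOf q) :=
  (S.existsUnique_rel q).choose_spec.1

lemma relOf_eq {q : X × X} {i : Fin (d + 1)} (h : q ∈ S.r i) : S.relOf q = i :=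
  ((S.existsUnique_rel q).choose_spec.2 i h).symm

lemma diag_mem_r_zero (x : X) : ((x, x) : X × X) ∈ S.r 0 := by
  rw [S.r_zero]; exact rfl

lemma relOf_diag (x : X) : S.relOf (x, x) = 0 :=
  S.relOf_eq (S.diag_mem_r_zero x)

lemma pNum_pos {i j k : Fin (d + 1)} {q : X × X} (hq : q ∈ S.r k) {z : X}
    (h1 : (q.1, z) ∈ S.r i) (h2 : (z, q.2) ∈ S.r j) : 0 < S.pNum i j k := by
  rw [← S.ncard_eq i j k q hq]
  exact (Set.ncard_pos (Set.toFinite _)).mpr ⟨z, h1, h2⟩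

lemma relOf_comp_pos (x z y : X) :
    0 < S.pNum (S.relOf (x, z)) (S.relOf (z, y)) (S.relOf (x, y)) :=
  S.pNum_pos (S.mem_relOf (x, y)) (S.mem_relOf (x, z)) (S.mem_relOf (z, y))

lemma relOf_swap (x y : X) : S.relOf (y, x) = S.star (S.relOf (x, y)) :=
  S.relOf_eq ((S.mem_star _ (y, x)).mpr (S.mem_relOf (x, y)))

lemma pNum_zero_right (i : Fin (d + 1)) : 0 < S.pNum i 0 i := by
  obtain ⟨⟨a, b⟩, hab⟩ := S.r_nonempty i
  exact S.pNum_pos hab hab (S.diag_mem_r_zero b)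

variable {S}

lemma zero_mem_closed {T : Set (Fin (d + 1))} (hT : S.IsClosedSubset T) : (0 : Fin (d + 1)) ∈ T := by
  obtain ⟨t, ht⟩ := hT.1
  obtain ⟨⟨a, b⟩, hab⟩ := S.r_nonempty t
  refine hT.2 ⟨S.star t, ⟨t, ht, rfl⟩, t, ht, ?_⟩
  exact S.pNum_pos (S.diag_mem_r_zero b) ((S.mem_star t (b, a)).mpr hab) hab

lemma star_mem_closed {T : Set (Fin (d + 1))} (hT : S.IsClosedSubset T) {i : Fin (d + 1)}
    (hi : i ∈ T) : S.star i ∈ T :=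
  hT.2 ⟨S.star i, ⟨i, hi, rfl⟩, 0, zero_mem_closed hT, S.pNum_zero_right _⟩

lemma rel_trans_closed {T : Set (Fin (d + 1))} (hT : S.IsClosedSubset T) {x z y : X}
    (h1 : S.relOf (x, z) ∈ T) (h2 : S.relOf (z, y) ∈ T) : S.relOf (x, y) ∈ T := by
  refine hT.2 ⟨S.relOf (x, z), ⟨S.relOf (z, x), ?_, (S.relOf_swap z x).symm⟩,
    S.relOf (z, y), h2, S.relOf_comp_pos x z y⟩
  rw [S.relOf_swap x z]
  exact star_mem_closed hT h1

lemma rel_mem_of_stronglyNormal {T : Set (Fin (d + 1))} (hT : S.IsStronglyNormal T)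
    {j : Fin (d + 1)} {x z z' : X} (h1 : (x, z) ∈ S.r j) (h2 : (x, z') ∈ S.r j) :
    S.relOf (z, z') ∈ T := by
  have hzx : ((z, x) : X × X) ∈ S.r (S.star j) := (S.mem_star j (z, x)).mpr h1
  refine hT.2 j ⟨S.star j, ⟨S.star j, rfl, 0, zero_mem_closed hT.1, S.pNum_zero_right _⟩,
    j, rfl, ?_⟩
  exact S.pNum_pos (S.mem_relOf (z, z')) hzx h2

lemma ncard_r_left (i : Fin (d + 1)) (x : X) : {z : X | (x, z) ∈ S.r i}.ncard = S.val i := by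
  have h := S.ncard_eq i (S.star i) 0 (x, x) (S.diag_mem_r_zero x)
  rw [AssocScheme.val, ← h]
  congr 1
  ext z
  simp only [Set.mem_setOf_eq, iff_self_and]
  intro hz
  exact (S.mem_star i (z, x)).mpr hz

variable (S)

/-- Indicator matrix of the union of the relations in `T`. -/
noncomputable def sigma (𝔽 : Type*) [Field 𝔽] (T : Set (Fin (d + 1))) : Matrix X X 𝔽 :=
  Matrix.of fun x y => if S.relOf (x, y) ∈ T then 1 else 0

lemma sigma_eq_sum (𝔽 : Type*) [Field 𝔽] (T : Set (Fin (d + 1))) :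
    S.sigma 𝔽 T = ∑ i ∈ Finset.univ.filter (· ∈ T), S.adj 𝔽 i := by
  ext x y
  rw [Matrix.sum_apply]
  have : ∀ i : Fin (d + 1),
      (S.adj 𝔽 i) x y = if i = S.relOf (x, y) then (1 : 𝔽) else 0 := by
    intro i
    simp only [AssocScheme.adj, Matrix.of_apply]
    congr 1
    simp only [eq_iff_iff]
    exact ⟨fun h => (S.relOf_eq h).symm, fun h => h ▸ S.mem_relOf (x, y)⟩
  simp only [this]
  rw [Finset.sum_ite_eq' (Finset.univ.filter (· ∈ T)) (S.relOf (x, y)) (fun _ => (1 : 𝔽))]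
  simp [AssocScheme.sigma]

lemma sigma_mem_span (𝔽 : Type*) [Field 𝔽] (T : Set (Fin (d + 1))) :
    S.sigma 𝔽 T ∈ Submodule.span 𝔽 (Set.range (S.adj 𝔽)) := by
  rw [S.sigma_eq_sum 𝔽 T]
  exact Submodule.sum_mem _ fun i _ => Submodule.subset_span ⟨i, rfl⟩

variable {S}

lemma isTrivialVector_sigma (𝔽 : Type*) [Field 𝔽] (p : ℕ) [Fact p.Prime] [CharP 𝔽 p]
    (hp : ∀ i : Fin (d + 1), i ∉ S.thinRadical → p ∣ S.val i)
    {T : Set (Fin (d + 1))} (hT : S.IsStronglyNormal T) (hrad : S.thinRadical ⊆ T) :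
    S.IsTrivialVector 𝔽 (S.sigma 𝔽 T) := by
  have hdiag : ∀ x : X, S.sigma 𝔽 T x x = 1 := by
    intro x
    simp only [AssocScheme.sigma, Matrix.of_apply, S.relOf_diag x,
      if_pos (zero_mem_closed hT.1)]
  refine ⟨?_, S.sigma_mem_span 𝔽 T, ?_⟩
  · intro h
    obtain ⟨x⟩ := ‹Nonempty X›
    have := hdiag x
    rw [h] at this
    simp at this
  · intro j
    ext x y
    rw [Matrix.mul_apply, Matrix.smul_apply, smul_eq_mul]
    have hsum : ∑ z : X, S.adj 𝔽 j x z * S.sigma 𝔽 T z y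
        = ({z : X | (x, z) ∈ S.r j ∧ S.relOf (z, y) ∈ T}.ncard : 𝔽) := by
      rw [Set.ncard_eq_toFinset_card', Set.toFinset_setOf, ← Finset.sum_boole]
      refine Finset.sum_congr rfl fun z _ => ?_
      simp only [AssocScheme.sigma, AssocScheme.adj, Matrix.of_apply, ite_and, ite_mul,
        one_mul, zero_mul]
    rw [hsum]
    by_cases hj : j ∈ T
    · by_cases hxy : S.relOf (x, y) ∈ T
      · rw [AssocScheme.sigma, Matrix.of_apply, if_pos hxy, mul_one]
        have hset : {z : X | (x, z) ∈ S.r j ∧ S.relOf (z, y) ∈ T} = {z : X | (x, z) ∈ S.r j} := by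
          ext z
          simp only [Set.mem_setOf_eq, and_iff_left_iff_imp]
          intro hz
          have hzx : S.relOf (z, x) ∈ T := by
            rw [S.relOf_swap x z, S.relOf_eq hz]
            exact star_mem_closed hT.1 hj
          exact rel_trans_closed hT.1 hzx hxy
        rw [hset, ncard_r_left]
      · rw [AssocScheme.sigma, Matrix.of_apply, if_neg hxy, mul_zero]
        have hset : {z : X | (x, z) ∈ S.r j ∧ S.relOf (z, y) ∈ T} = (∅ : Set X) := by
          ext z
          simp only [Set.mem_setOf_eq, Set.mem_empty_iff_false, iff_false, not_and]
          intro hz hzy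
          exact hxy (rel_trans_closed hT.1 (by rw [S.relOf_eq hz]; exact hj) hzy)
        rw [hset]
        simp
    · have hval : ((S.val j : ℕ) : 𝔽) = 0 :=
        (CharP.cast_eq_zero_iff 𝔽 p _).mpr (hp j fun h => hj (hrad h))
      rw [hval, zero_mul]
      by_cases hne : {z : X | (x, z) ∈ S.r j ∧ S.relOf (z, y) ∈ T}.Nonempty
      · obtain ⟨z0, hz0j, hz0y⟩ := hne
        have hset : {z : X | (x, z) ∈ S.r j ∧ S.relOf (z, y) ∈ T} = {z : X | (x, z) ∈ S.r j} := by
          ext z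
          simp only [Set.mem_setOf_eq, and_iff_left_iff_imp]
          intro hz
          have h1 : S.relOf (z, z0) ∈ T := rel_mem_of_stronglyNormal hT hz hz0j
          exact rel_trans_closed hT.1 h1 hz0y
        rw [hset, ncard_r_left, hval]
      · rw [Set.not_nonempty_iff_eq_empty] at hne
        rw [hne]
        simp

end AssocScheme


/-- Suppose `p ∣ k_i` for every `R_i ∈ S ∖ O_ϑ(S)`. If `S` is `p`-transitive, then `S` is
the unique strongly normal closed subset of `S` containing `O_ϑ(S)`. -/
theorem univ_unique_stronglyNormal_of_isPTransitive
    {X : Type*} [Fintype X] [Nonempty X] {d : ℕ} (S : AssocScheme X d)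
    (𝔽 : Type*) [Field 𝔽] (p : ℕ) [Fact p.Prime] [CharP 𝔽 p]
    (hp : ∀ i : Fin (d + 1), i ∉ S.thinRadical → p ∣ S.val i)
    (htr : S.IsPTransitive 𝔽) :
    S.IsStronglyNormal (Set.univ : Set (Fin (d + 1))) ∧
      ∀ T : Set (Fin (d + 1)), S.IsStronglyNormal T → S.thinRadical ⊆ T →
        T = Set.univ := by
  classical
  have hun : S.IsStronglyNormal (Set.univ : Set (Fin (d + 1))) := by
    exact ⟨⟨⟨0, Set.mem_univ 0⟩, fun _ _ => Set.mem_univ _⟩, fun _ _ _ => Set.mem_univ _⟩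
  refine ⟨hun, fun T hT hrad => ?_⟩
  have h1 := AssocScheme.isTrivialVector_sigma 𝔽 p hp hT hrad
  have h2 := AssocScheme.isTrivialVector_sigma 𝔽 p hp hun (Set.subset_univ _)
  obtain ⟨W, _, huniq⟩ := htr
  have e1 : Submodule.span 𝔽 {S.sigma 𝔽 T} = W := huniq _ ⟨_, h1, rfl⟩
  have e2 : Submodule.span 𝔽 {S.sigma 𝔽 (Set.univ : Set (Fin (d + 1)))} = W :=
    huniq _ ⟨_, h2, rfl⟩
  have hmem : S.sigma 𝔽 T ∈ Submodule.span 𝔽 {S.sigma 𝔽 (Set.univ : Set (Fin (d + 1)))} := by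
    rw [e2, ← e1]
    exact Submodule.mem_span_singleton_self _
  obtain ⟨c, hc⟩ := Submodule.mem_span_singleton.mp hmem
  refine Set.eq_univ_iff_forall.mpr fun j => ?_
  obtain ⟨⟨a, b⟩, hab⟩ := S.r_nonempty j
  have hdiagT : S.sigma 𝔽 T a a = 1 := by
    simp only [AssocScheme.sigma, Matrix.of_apply, S.relOf_diag a,
      if_pos (AssocScheme.zero_mem_closed hT.1)]
  have hdiagU : S.sigma 𝔽 (Set.univ : Set (Fin (d + 1))) a a = 1 := by
    simp [AssocScheme.sigma]
  have hc1 : c = 1 := by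
    have := congr_fun (congr_fun hc a) a
    rwa [Matrix.smul_apply, hdiagT, hdiagU, smul_eq_mul, mul_one] at this
  have hab1 : S.sigma 𝔽 T a b = 1 := by
    have := congr_fun (congr_fun hc a) b
    rw [hc1, Matrix.smul_apply, one_smul] at this
    rw [← this]
    simp [AssocScheme.sigma]
  by_contra hjT
  rw [AssocScheme.sigma, Matrix.of_apply, if_neg (by rwa [S.relOf_eq hab])] at hab1
  exact zero_ne_one hab1
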